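/- Fix η > 0 and, for each natural number n ≥ 2, set δ = 1/2 and λ = 1/n and compute p̂ := c(1−δ)/(c(1−δ) + g·(1−δ + λδ(1+δ−λδ))) and p*(√δ) := c(1−√δ)/(c(1−√δ) + g·(1 − √δ(1−λ))) with these values. Then, as n → ∞: (i) p*(√δ) converges to c/(c+g); (ii) φ^{⌊ηn⌋}(p̂) converges to c·e^{−η}/(g + c·e^{−η}); and (iii) c·e^{−η}/(g + c·e^{−η}) < c/(c+g), where φ(p) := (1−λ)p/(1−λp) and φ^k denotes the k-fold iterate. -/

import Mathlib

/-!
Bayes' rule multiplies the odds of the good state by `1 - λ` after each failure, so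
`φ^[k] (a / (a + b)) = (1 - λ)^k a / ((1 - λ)^k a + b)`. With `λ = 1/n` and `k = ⌊ηn⌋`,
`(1 - 1/n)^k → e^{-η}`, which gives (ii); (i) is continuity at `λ = 0`, and (iii) holds
because `x ↦ x / (g + x)` is increasing and `c e^{-η} < c`.
-/

open Filter Real Topology

theorem one_div_natCast_le_one (n : ℕ) : 1 / (n : ℝ) ≤ 1 :=
  one_div (n : ℝ) ▸ Nat.cast_inv_le_one n

noncomputable def bayesUpdate (l p : ℝ) : ℝ := (1 - l) * p / (1 - l * p)

theorem bayesUpdate_div_add {l a b : ℝ} (hl : l ≤ 1) (ha : 0 ≤ a) (hb : 0 < b) :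
    bayesUpdate l (a / (a + b)) = (1 - l) * a / ((1 - l) * a + b) := by
  have hab : a + b ≠ 0 := by positivity
  have hlab : (1 - l) * a + b ≠ 0 := (add_pos_of_nonneg_of_pos
    (mul_nonneg (sub_nonneg.2 hl) ha) hb).ne'
  have hden : 1 - l * (a / (a + b)) = ((1 - l) * a + b) / (a + b) := by
    field_simp
    ring
  rw [bayesUpdate, hden]
  field_simp

theorem bayesUpdate_iterate_div_add {l a b : ℝ} (hl : l ≤ 1) (ha : 0 ≤ a) (hb : 0 < b)
    (k : ℕ) : (bayesUpdate l)^[k] (a / (a + b)) = (1 - l) ^ k * a / ((1 - l) ^ k * a + b) := by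
  induction k generalizing a with
  | zero => simp
  | succ k ih =>
    rw [Function.iterate_succ_apply, bayesUpdate_div_add hl ha hb,
      ih (mul_nonneg (sub_nonneg.2 hl) ha), pow_succ, mul_assoc]

theorem tendsto_one_add_div_pow_of_tendsto_div {k : ℕ → ℕ} {η : ℝ}
    (hk : Tendsto (fun n ↦ (k n : ℝ) / n) atTop (𝓝 η)) (t : ℝ) :
    Tendsto (fun n : ℕ ↦ (1 + t / n) ^ k n) atTop (𝓝 (exp (η * t))) := by
  have hlog : Tendsto (fun n : ℕ ↦ (n : ℝ) * log (1 + t / n)) atTop (𝓝 t) :=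
    (tendsto_mul_log_one_add_div_atTop t).comp tendsto_natCast_atTop_atTop
  have hbase : Tendsto (fun n : ℕ ↦ 1 + t / n) atTop (𝓝 1) := by
    simpa using tendsto_const_nhds.add (tendsto_const_div_atTop_nhds_zero_nat t)
  refine ((continuous_exp.tendsto _).comp (hk.mul hlog)).congr' ?_
  filter_upwards [hbase.eventually_const_lt one_pos, eventually_ne_atTop 0] with n hpos hn
  rw [Function.comp_apply, ← mul_assoc, div_mul_cancel₀ _ (Nat.cast_ne_zero.2 hn), exp_nat_mul,
    exp_log hpos]

theorem tendsto_bayesUpdate_iterate_atTop {k : ℕ → ℕ} {η a b : ℝ} {b' : ℕ → ℝ}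
    (hk : Tendsto (fun n ↦ (k n : ℝ) / n) atTop (𝓝 η)) (ha : 0 ≤ a)
    (hb' : ∀ n, 0 < b' n) (hb : Tendsto b' atTop (𝓝 b)) (hne : exp (-η) * a + b ≠ 0) :
    Tendsto (fun n : ℕ ↦ (bayesUpdate (1 / n))^[k n] (a / (a + b' n))) atTop
      (𝓝 (exp (-η) * a / (exp (-η) * a + b))) := by
  have hpow : Tendsto (fun n : ℕ ↦ (1 - 1 / (n : ℝ)) ^ k n) atTop (𝓝 (exp (-η))) := by
    simpa [← sub_eq_add_neg, neg_div] using tendsto_one_add_div_pow_of_tendsto_div hk (-1)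
  refine ((hpow.mul_const a).div ((hpow.mul_const a).add hb) hne).congr fun n ↦ ?_
  exact (bayesUpdate_iterate_div_add (one_div_natCast_le_one n) ha (hb' n) (k n)).symm

theorem tendsto_cutoff_atTop {c g s : ℝ} (hcg : c + g ≠ 0) (hs : s ≠ 1) :
    Tendsto (fun n : ℕ ↦ c * (1 - s) / (c * (1 - s) + g * (1 - s * (1 - 1 / n)))) atTop
      (𝓝 (c / (c + g))) := by
  have hden : Tendsto (fun n : ℕ ↦ c * (1 - s) + g * (1 - s * (1 - 1 / n))) atTop
      (𝓝 ((1 - s) * (c + g))) := by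
    have := ((by fun_prop : Continuous fun x : ℝ ↦ c * (1 - s) + g * (1 - s * (1 - x))).tendsto
      0).comp tendsto_one_div_atTop_nhds_zero_nat
    rwa [show c * (1 - s) + g * (1 - s * (1 - 0)) = (1 - s) * (c + g) by ring] at this
  rw [← mul_div_mul_left c (c + g) (sub_ne_zero.2 hs.symm), mul_comm (1 - s) c]
  exact tendsto_const_nhds.div hden (mul_ne_zero (sub_ne_zero.2 hs.symm) hcg)

/-- With `δ = 1/2` and `λ = 1/n`, as `n → ∞`:
(i) `p*(√δ)` converges to `c/(c+g)`;
(ii) `φ^⌊ηn⌋(p̂)` converges to `c·e^{−η}/(g + c·e^{−η})`;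
(iii) `c·e^{−η}/(g + c·e^{−η}) < c/(c+g)`. -/
theorem overexperimentation_limits
    (c g : ℝ) (hc : 0 < c) (hg : 0 < g) (η : ℝ) (hη : 0 < η) :
    Filter.Tendsto (fun n : ℕ =>
        c * (1 - Real.sqrt ((1:ℝ)/2)) /
          (c * (1 - Real.sqrt ((1:ℝ)/2)) +
            g * (1 - Real.sqrt ((1:ℝ)/2) * (1 - 1 / (n : ℝ)))))
      Filter.atTop (nhds (c / (c + g))) ∧
    Filter.Tendsto (fun n : ℕ =>
        (fun p : ℝ => (1 - 1 / (n : ℝ)) * p / (1 - 1 / (n : ℝ) * p))^[⌊η * (n : ℝ)⌋₊]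
          (c * (1 - (1:ℝ)/2) / (c * (1 - (1:ℝ)/2) +
            g * (1 - (1:ℝ)/2 + (1 / (n : ℝ)) * ((1:ℝ)/2) *
              (1 + (1:ℝ)/2 - (1 / (n : ℝ)) * ((1:ℝ)/2))))))
      Filter.atTop
      (nhds (c * Real.exp (-η) / (g + c * Real.exp (-η)))) ∧
    c * Real.exp (-η) / (g + c * Real.exp (-η)) < c / (c + g) := by
  have hsqrt : √((1 : ℝ) / 2) ≠ 1 := by
    rw [Ne, sqrt_eq_one]
    norm_num
  refine ⟨tendsto_cutoff_atTop (by positivity) hsqrt, ?_, ?_⟩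
  · set w : ℝ → ℝ := fun l ↦ g * (1 - 1 / 2 + l * (1 / 2) * (1 + 1 / 2 - l * (1 / 2)))
    have hw_pos : ∀ n : ℕ, 0 < w (1 / n) := fun n ↦ by
      have h0 : 0 ≤ 1 / (n : ℝ) := by positivity
      exact mul_pos hg (by nlinarith [one_div_natCast_le_one n])
    have hw_lim : Tendsto (fun n : ℕ ↦ w (1 / n)) atTop (𝓝 (g * (1 - 1 / 2))) := by
      have := ((by fun_prop : Continuous w).tendsto 0).comp tendsto_one_div_atTop_nhds_zero_nat
      rwa [show w 0 = g * (1 - 1 / 2) by simp [w]] at this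
    have hk := (tendsto_nat_floor_mul_div_atTop hη.le).comp tendsto_natCast_atTop_atTop
    rw [show c * exp (-η) / (g + c * exp (-η))
        = exp (-η) * (c * (1 - 1 / 2)) / (exp (-η) * (c * (1 - 1 / 2)) + g * (1 - 1 / 2)) by
      field_simp; ring]
    exact tendsto_bayesUpdate_iterate_atTop hk (by positivity) hw_pos hw_lim (by positivity)
  · have he : exp (-η) < 1 := exp_lt_one_iff.2 (neg_lt_zero.2 hη)
    rw [div_lt_div_iff₀ (by positivity) (by positivity)]
    nlinarith [mul_pos (mul_pos hc hg) (sub_pos.2 he)]
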